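/- arXiv:1208.2654 — 4 statements merged into one kernel-verified Lean document; each statement's English description precedes it below -/
import Mathlib

section
/- Let N be a pWF net with transition t* and place p* such that t*'s postset is exactly {p*}, p*'s preset is exactly {t*}, p* is not an input or output place, and there are no edges between •t* and p*•. Let M be obtained from N by removing t* and p* and adding all edges in •t* × p*•. Then M is substitution-sound if N is substitution-sound. -/
structure Net where
  P : Finset ℕ
  T : Finset ℕ
  F : Finset (ℕ × ℕ)
  I : Finset ℕ
  O : Finset ℕ

namespace Net

def nodes (N : Net) : Finset ℕ := N.P ∪ N.T

def IsPetri (N : Net) : Prop :=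
  Disjoint N.P N.T ∧ ∀ e ∈ N.F, (e.1 ∈ N.P ∧ e.2 ∈ N.T) ∨ (e.1 ∈ N.T ∧ e.2 ∈ N.P)

def edge (N : Net) (x y : ℕ) : Prop := (x, y) ∈ N.F

def pathReach (N : Net) : ℕ → ℕ → Prop := Relation.ReflTransGen N.edge

def Connected (N : Net) : Prop :=
  (∀ x ∈ N.nodes, ∃ i ∈ N.I, N.pathReach i x) ∧
  (∀ x ∈ N.nodes, ∃ o ∈ N.O, N.pathReach x o)

/-- place workflow net -/
def IsPWF (N : Net) : Prop :=
  N.IsPetri ∧ N.I ⊆ N.P ∧ N.O ⊆ N.P ∧ N.I.Nonempty ∧ N.O.Nonempty ∧ N.Connected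

/-- transition workflow net -/
def IsTWF (N : Net) : Prop :=
  N.IsPetri ∧ N.I ⊆ N.T ∧ N.O ⊆ N.T ∧ N.I.Nonempty ∧ N.O.Nonempty ∧ N.Connected

def IsWF (N : Net) : Prop := N.IsPWF ∨ N.IsTWF

abbrev Marking := ℕ → ℕ

def pre (N : Net) (t : ℕ) : Marking := fun p => if (p, t) ∈ N.F then 1 else 0
def post (N : Net) (t : ℕ) : Marking := fun p => if (t, p) ∈ N.F then 1 else 0
def enabled (N : Net) (t : ℕ) (m : Marking) : Prop := t ∈ N.T ∧ N.pre t ≤ m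
def fire (N : Net) (t : ℕ) (m : Marking) : Marking := fun p => m p - N.pre t p + N.post t p
def stepRel (N : Net) (m m' : Marking) : Prop := ∃ t, N.enabled t m ∧ m' = N.fire t m
def reach (N : Net) : Marking → Marking → Prop := Relation.ReflTransGen N.stepRel

/-- the marking with `k` tokens on each element of `S` -/
def bag (k : ℕ) (S : Finset ℕ) : Marking := fun p => if p ∈ S then k else 0

def kSound (N : Net) (k : ℕ) : Prop :=
  ∀ m, N.reach (bag k N.I) m → N.reach m (bag k N.O)

def starSound (N : Net) : Prop := ∀ k, 1 ≤ k → N.kSound k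

def subSound (N : Net) : Prop :=
  ∀ k k' : ℕ, k' ≤ k → ∀ m : Marking,
    N.reach (bag k N.I) (m + bag k' N.O) → N.reach m (bag (k - k') N.O)

/-- place completion of a tWF net -/
def pc (N : Net) (pi po : ℕ) : Net where
  P := insert pi (insert po N.P)
  T := N.T
  F := (N.I.image fun t => (pi, t)) ∪ (N.O.image fun t => (t, po)) ∪ N.F
  I := {pi}
  O := {po}

/-- transition completion of a pWF net -/
def tc (N : Net) (t_i t_o : ℕ) : Net where
  P := N.P
  T := insert t_i (insert t_o N.T)
  F := (N.I.image fun p => (t_i, p)) ∪ (N.O.image fun p => (p, t_o)) ∪ N.F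
  I := {t_i}
  O := {t_o}

/-- *-soundness of a tWF net: its place completion (for fresh names) is *-sound -/
def tStarSound (N : Net) : Prop :=
  ∀ pi po : ℕ, pi ∉ N.nodes → po ∉ N.nodes → pi ≠ po → (N.pc pi po).starSound

/-- sub-soundness of a tWF net: its place completion (for fresh names) is sub-sound -/
def tSubSound (N : Net) : Prop :=
  ∀ pi po : ℕ, pi ∉ N.nodes → po ∉ N.nodes → pi ≠ po → (N.pc pi po).subSound

/-- preset of a node, as a finset -/
def inEdges (N : Net) (n : ℕ) : Finset ℕ := (N.F.filter fun e => e.2 = n).image Prod.fst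
/-- postset of a node, as a finset -/
def outEdges (N : Net) (n : ℕ) : Finset ℕ := (N.F.filter fun e => e.1 = n).image Prod.snd

/-- substitution of the node `n` of `N` by the net `M` (place or transition substitution,
depending on the type of `n`): each input node of `M` inherits the preset of `n`, each
output node of `M` inherits the postset of `n`. -/
def subst (N : Net) (n : ℕ) (M : Net) : Net where
  P := (N.P.erase n) ∪ M.P
  T := (N.T.erase n) ∪ M.T
  F := (N.F.filter fun e => e.1 ≠ n ∧ e.2 ≠ n) ∪ M.F
        ∪ (N.inEdges n ×ˢ M.I) ∪ (M.O ×ˢ N.outEdges n)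
  I := if n ∈ N.I then (N.I.erase n) ∪ M.I else N.I
  O := if n ∈ N.O then (N.O.erase n) ∪ M.O else N.O

def Acyclic (N : Net) : Prop := ∀ x, ¬ Relation.TransGen N.edge x x

/-- AND net condition (on top of being a WF net) -/
def IsAND (N : Net) : Prop :=
  N.Acyclic ∧ ∀ p ∈ N.P,
    ((p ∈ N.I ∧ (N.inEdges p).card = 0) ∨ (p ∉ N.I ∧ (N.inEdges p).card = 1)) ∧
    ((p ∈ N.O ∧ (N.outEdges p).card = 0) ∨ (p ∉ N.O ∧ (N.outEdges p).card = 1))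

/-- OR net condition (on top of being a WF net) -/
def IsOR (N : Net) : Prop :=
  ∀ t ∈ N.T,
    ((t ∈ N.I ∧ (N.inEdges t).card = 0) ∨ (t ∉ N.I ∧ (N.inEdges t).card = 1)) ∧
    ((t ∈ N.O ∧ (N.outEdges t).card = 0) ∨ (t ∉ N.O ∧ (N.outEdges t).card = 1))

end Net
/-- removal of a transition-place pair: remove `t` and `p` and add all edges
from the preset of `t` to the postset of `p` -/
def Net.removeTP (N : Net) (t p : ℕ) : Net where
  P := N.P.erase p
  T := N.T.erase t
  F := (N.F.filter fun e => e.1 ≠ t ∧ e.2 ≠ t ∧ e.1 ≠ p ∧ e.2 ≠ p)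
        ∪ (N.inEdges t ×ˢ N.outEdges p)
  I := N.I
  O := N.O

lemma Net.mem_inEdges {N : Net} {x n : ℕ} : x ∈ N.inEdges n ↔ (x, n) ∈ N.F := by
  simp only [Net.inEdges, Finset.mem_image, Finset.mem_filter]
  constructor
  · rintro ⟨⟨a, b⟩, ⟨h, rfl⟩, rfl⟩; exact h
  · intro h; exact ⟨(x, n), ⟨h, rfl⟩, rfl⟩

lemma Net.mem_outEdges {N : Net} {x n : ℕ} : x ∈ N.outEdges n ↔ (n, x) ∈ N.F := by
  simp only [Net.outEdges, Finset.mem_image, Finset.mem_filter]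
  constructor
  · rintro ⟨⟨a, b⟩, ⟨h, rfl⟩, rfl⟩; exact h
  · intro h; exact ⟨(n, x), ⟨h, rfl⟩, rfl⟩

lemma reflTransGen_lift {α : Type*} {r s : α → α → Prop} (φ : α → α)
    (h : ∀ a b, r a b → Relation.ReflTransGen s (φ a) (φ b)) {a b : α}
    (hr : Relation.ReflTransGen r a b) : Relation.ReflTransGen s (φ a) (φ b) := by
  induction hr with
  | refl => exact .refl
  | tail _ hbc ih => exact ih.trans (h _ _ hbc)

/-- un-fire the tokens on `p` back onto the preset of `t` -/
def unfire (t p : ℕ) (F : Finset (ℕ × ℕ)) (m : Net.Marking) : Net.Marking :=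
  fun q => if q = p then 0 else if (q, t) ∈ F then m q + m p else m q
theorem stmt14 (N : Net) (t p : ℕ) (hN : N.IsPWF) (ht : t ∈ N.T) (hp : p ∈ N.P)
    (hpost : N.outEdges t = {p}) (hpre : N.inEdges p = {t})
    (hpI : p ∉ N.I) (hpO : p ∉ N.O)
    (hnoedge : ∀ x ∈ N.inEdges t, ∀ y ∈ N.outEdges p, (x, y) ∉ N.F ∧ (y, x) ∉ N.F)
    (hsub : N.subSound) : (N.removeTP t p).subSound := by
  obtain ⟨⟨hdisj, hbip⟩, hIP, hOP, -, -, -⟩ := hN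
  have hpT : p ∉ N.T := Finset.disjoint_left.mp hdisj hp
  have hout_t : ∀ q, (t, q) ∈ N.F ↔ q = p := by
    intro q; rw [← Net.mem_outEdges, hpost, Finset.mem_singleton]
  have hin_p : ∀ q, (q, p) ∈ N.F ↔ q = t := by
    intro q; rw [← Net.mem_inEdges, hpre, Finset.mem_singleton]
  have hpt : (p, t) ∉ N.F := fun h =>
    (hnoedge p (Net.mem_inEdges.mpr h) t (Net.mem_outEdges.mpr h)).1 h
  have hptne : p ≠ t := fun h => hpT (h ▸ ht)
  have hSU : ∀ x u, (x, t) ∈ N.F → (p, u) ∈ N.F → (x, u) ∉ N.F ∧ (u, x) ∉ N.F :=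
    fun x u hx hu => hnoedge x (Net.mem_inEdges.mpr hx) u (Net.mem_outEdges.mpr hu)
  have hTT : ∀ u v, u ∈ N.T → v ∈ N.T → (u, v) ∉ N.F := by
    intro u v hu hv h
    rcases hbip _ h with ⟨h1, _⟩ | ⟨_, h2⟩
    · exact Finset.disjoint_left.mp hdisj h1 hu
    · exact Finset.disjoint_left.mp hdisj h2 hv
  have hUinT : ∀ u, (p, u) ∈ N.F → u ∈ N.T := by
    intro u h
    rcases hbip _ h with ⟨_, h2⟩ | ⟨h1, _⟩
    · exact h2
    · exact absurd h1 hpT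
  have hSinP : ∀ x, (x, t) ∈ N.F → x ∈ N.P := by
    intro x h
    rcases hbip _ h with ⟨h1, _⟩ | ⟨_, h2⟩
    · exact h1
    · exact absurd h2 (Finset.disjoint_right.mp hdisj ht)
  -- membership in the edges of the reduced net
  have hMF : ∀ a b : ℕ, ((a, b) ∈ (N.removeTP t p).F) ↔
      (((a, b) ∈ N.F ∧ a ≠ t ∧ b ≠ t ∧ a ≠ p ∧ b ≠ p) ∨ ((a, t) ∈ N.F ∧ (p, b) ∈ N.F)) := by
    intro a b
    simp [Net.removeTP, Finset.mem_union, Finset.mem_filter, Finset.mem_product,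
      Net.mem_inEdges, Net.mem_outEdges]
  -- post of a transition u ≠ t is unchanged
  have hpostM : ∀ u, u ∈ N.T → u ≠ t → (N.removeTP t p).post u = N.post u := by
    intro u hu hut
    funext q
    have h : ((u, q) ∈ (N.removeTP t p).F) ↔ (u, q) ∈ N.F := by
      rw [hMF]
      constructor
      · rintro (⟨h, -⟩ | ⟨h1, -⟩)
        · exact h
        · exact absurd hu (Finset.disjoint_left.mp hdisj (hSinP u h1))
      · intro h
        exact Or.inl ⟨h, hut, fun h2 => hTT u t hu ht (h2 ▸ h),
          fun h2 => hpT (h2 ▸ hu), fun h2 => hut ((hin_p u).mp (h2 ▸ h))⟩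
    simp only [Net.post, h]
  -- pre of a transition not consuming from p is unchanged
  have hpreM1 : ∀ u, u ∈ N.T → u ≠ t → (p, u) ∉ N.F → (N.removeTP t p).pre u = N.pre u := by
    intro u hu hut hpu
    funext q
    have h : ((q, u) ∈ (N.removeTP t p).F) ↔ (q, u) ∈ N.F := by
      rw [hMF]
      constructor
      · rintro (⟨h, -⟩ | ⟨-, h2⟩)
        · exact h
        · exact absurd h2 hpu
      · intro h
        exact Or.inl ⟨h, fun h2 => hpT (((hout_t u).mp (h2 ▸ h)) ▸ hu), hut,
          fun h2 => hpu (h2 ▸ h), fun h2 => hpT (h2 ▸ hu)⟩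
    simp only [Net.pre, h]
  -- pre of a transition consuming from p
  have hpreM2 : ∀ u, (p, u) ∈ N.F → ∀ q, (N.removeTP t p).pre u q =
      (if (q, t) ∈ N.F then 1 else if q = p then 0 else N.pre u q) := by
    intro u hpu q
    have huT : u ∈ N.T := hUinT u hpu
    have hut : u ≠ t := fun h => hpt (h ▸ hpu)
    simp only [Net.pre]
    by_cases h1 : (q, t) ∈ N.F
    · rw [if_pos ((hMF q u).mpr (Or.inr ⟨h1, hpu⟩)), if_pos h1]
    · rw [if_neg h1]
      by_cases h2 : q = p
      · subst h2
        rw [if_pos rfl, if_neg]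
        rw [hMF]
        rintro (⟨-, -, -, hh, -⟩ | ⟨hh, -⟩)
        · exact hh rfl
        · exact hpt hh
      · rw [if_neg h2]
        have h : ((q, u) ∈ (N.removeTP t p).F) ↔ (q, u) ∈ N.F := by
          rw [hMF]
          constructor
          · rintro (⟨h, -⟩ | ⟨h3, -⟩)
            · exact h
            · exact absurd h3 h1
          · intro h
            exact Or.inl ⟨h, fun h3 => hpT (((hout_t u).mp (h3 ▸ h)) ▸ huT), hut, h2,
              fun h3 => hpT (h3 ▸ huT)⟩
        simp only [h]
  -- pre and post of the reduced net at place p vanish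
  have hMpre_p : ∀ u, (N.removeTP t p).pre u p = 0 := by
    intro u
    rw [Net.pre, if_neg]
    rw [hMF]
    rintro (⟨-, -, -, hh, -⟩ | ⟨hh, -⟩)
    · exact hh rfl
    · exact hpt hh
  have hMpost_p : ∀ u, (N.removeTP t p).post u p = 0 := by
    intro u
    rw [Net.post, if_neg]
    rw [hMF]
    rintro (⟨-, -, -, -, hh⟩ | ⟨-, hh⟩)
    · exact hh rfl
    · exact hptne ((hin_p p).mp hh)
  have hpostu_p : ∀ u, u ≠ t → N.post u p = 0 := by
    intro u hut
    rw [Net.post, if_neg]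
    intro h; exact hut ((hin_p u).mp h)
  have hpost_t : ∀ q, N.post t q = if q = p then 1 else 0 := by
    intro q
    by_cases h : q = p
    · rw [Net.post, if_pos ((hout_t q).mpr h), if_pos h]
    · rw [Net.post, if_neg (fun hh => h ((hout_t q).mp hh)), if_neg h]
  have hpreu : ∀ u q, N.pre u q = if (q, u) ∈ N.F then 1 else 0 := fun u q => rfl
  -- simulation A : a step of the reduced net is simulated by N
  have hAstep : ∀ m₁ m₂, (N.removeTP t p).stepRel m₁ m₂ → N.reach m₁ m₂ := by
    rintro m₁ _ ⟨u, ⟨huT, hen⟩, rfl⟩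
    have huT' : u ∈ N.T := Finset.mem_of_mem_erase huT
    have hut : u ≠ t := Finset.ne_of_mem_erase huT
    by_cases hpu : (p, u) ∈ N.F
    · -- fire t then u in N
      have hpup : N.pre u p = 1 := by rw [hpreu, if_pos hpu]
      have hpostup : N.post u p = 0 := hpostu_p u hut
      have hen1 : ∀ q, (q, t) ∈ N.F → 1 ≤ m₁ q := by
        intro q hq
        have := hen q
        rwa [hpreM2 u hpu q, if_pos hq] at this
      have hent : N.enabled t m₁ := by
        refine ⟨ht, fun q => ?_⟩
        rw [hpreu]
        split_ifs with h
        · exact hen1 q h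
        · exact Nat.zero_le _
      have henu : N.enabled u (N.fire t m₁) := by
        refine ⟨huT', fun q => ?_⟩
        show N.pre u q ≤ m₁ q - N.pre t q + N.post t q
        rw [hpost_t, hpreu t q]
        by_cases h1 : (q, t) ∈ N.F
        · have h9 : N.pre u q = 0 := by rw [hpreu, if_neg (hSU q u h1 hpu).1]
          rw [h9]
          exact Nat.zero_le _
        · by_cases h2 : q = p
          · have h9 : N.pre u q = 1 := by rw [h2, hpup]
            rw [h9, if_neg h1, if_pos h2]
            omega
          · have h4 := hen q
            rw [hpreM2 u hpu q, if_neg h1, if_neg h2] at h4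
            rw [if_neg h1, if_neg h2]
            simpa using h4
      have hfe : (N.removeTP t p).fire u m₁ = N.fire u (N.fire t m₁) := by
        funext q
        show m₁ q - (N.removeTP t p).pre u q + (N.removeTP t p).post u q
            = (m₁ q - N.pre t q + N.post t q) - N.pre u q + N.post u q
        rw [hpostM u huT' hut, hpreM2 u hpu q, hpost_t, hpreu t q]
        by_cases h1 : (q, t) ∈ N.F
        · have hq1 : q ≠ p := fun h => hpt (h ▸ h1)
          have h9 : N.pre u q = 0 := by rw [hpreu, if_neg (hSU q u h1 hpu).1]
          have h4 := hen1 q h1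
          rw [if_pos h1, if_pos h1, if_neg hq1, h9]
          omega
        · by_cases h2 : q = p
          · have h9 : N.pre u q = 1 := by rw [h2, hpup]
            have h10 : N.post u q = 0 := by rw [h2, hpostup]
            rw [if_neg h1, if_neg h1, if_pos h2, if_pos h2, h9, h10]
            omega
          · rw [if_neg h1, if_neg h1, if_neg h2, if_neg h2]
            omega
      exact Relation.ReflTransGen.head ⟨t, hent, rfl⟩
        (Relation.ReflTransGen.single ⟨u, henu, hfe⟩)
    · have hp1 := hpreM1 u huT' hut hpu
      have hp2 := hpostM u huT' hut
      refine Relation.ReflTransGen.single ⟨u, ⟨huT', ?_⟩, ?_⟩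
      · rw [← hp1]; exact hen
      · funext q
        simp only [Net.fire, hp1, hp2]
  -- simulation B : a step of N is simulated by the reduced net after un-firing
  have hBstep : ∀ m₁ m₂, N.stepRel m₁ m₂ →
      (N.removeTP t p).reach (unfire t p N.F m₁) (unfire t p N.F m₂) := by
    rintro m₁ _ ⟨u, ⟨huT, hen⟩, rfl⟩
    by_cases hut : u = t
    · rw [hut]
      rw [hut] at hen
      have heq : unfire t p N.F (N.fire t m₁) = unfire t p N.F m₁ := by
        funext q
        show (if q = p then 0 else if (q, t) ∈ N.F then
                (N.fire t m₁) q + (N.fire t m₁) p else (N.fire t m₁) q)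
            = (if q = p then 0 else if (q, t) ∈ N.F then m₁ q + m₁ p else m₁ q)
        show (if q = p then 0 else if (q, t) ∈ N.F then
                (m₁ q - N.pre t q + N.post t q) + (m₁ p - N.pre t p + N.post t p)
              else m₁ q - N.pre t q + N.post t q)
            = (if q = p then 0 else if (q, t) ∈ N.F then m₁ q + m₁ p else m₁ q)
        have hpp : N.pre t p = 0 := by rw [hpreu, if_neg hpt]
        have hqp : N.post t p = 1 := by rw [hpost_t, if_pos rfl]
        by_cases h2 : q = p
        · simp only [if_pos h2]
        · simp only [if_neg h2]
          have hqq : N.post t q = 0 := by rw [hpost_t, if_neg h2]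
          by_cases h1 : (q, t) ∈ N.F
          · have h4 : 1 ≤ m₁ q := by
              have := hen q
              rwa [hpreu, if_pos h1] at this
            have h8 : N.pre t q = 1 := by rw [hpreu, if_pos h1]
            simp only [if_pos h1, h8, hqq, hpp, hqp]
            omega
          · have h8 : N.pre t q = 0 := by rw [hpreu, if_neg h1]
            simp only [if_neg h1, h8, hqq]
            omega
      rw [heq]
      exact Relation.ReflTransGen.refl
    · have huT' : u ∈ N.T := huT
      have hMT : u ∈ (N.removeTP t p).T := Finset.mem_erase.mpr ⟨hut, huT'⟩
      have hpostup : N.post u p = 0 := hpostu_p u hut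
      by_cases hpu : (p, u) ∈ N.F
      · -- one step of the reduced net
        have hpup : N.pre u p = 1 := by rw [hpreu, if_pos hpu]
        have hmp1 : 1 ≤ m₁ p := by
          have := hen p
          rwa [hpup] at this
        have henM : (N.removeTP t p).enabled u (unfire t p N.F m₁) := by
          refine ⟨hMT, fun q => ?_⟩
          show (N.removeTP t p).pre u q ≤
            (if q = p then 0 else if (q, t) ∈ N.F then m₁ q + m₁ p else m₁ q)
          rw [hpreM2 u hpu q]
          by_cases h1 : (q, t) ∈ N.F
          · have hq1 : q ≠ p := fun h => hpt (h ▸ h1)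
            simp only [if_pos h1, if_neg hq1]
            omega
          · by_cases h2 : q = p
            · simp only [if_neg h1, if_pos h2]
              exact Nat.zero_le _
            · simp only [if_neg h1, if_neg h2]
              exact hen q
        have hfe : (N.removeTP t p).fire u (unfire t p N.F m₁) =
            unfire t p N.F (N.fire u m₁) := by
          funext q
          show (if q = p then 0 else if (q, t) ∈ N.F then m₁ q + m₁ p else m₁ q)
              - (N.removeTP t p).pre u q + (N.removeTP t p).post u q
            = (if q = p then 0 else if (q, t) ∈ N.F then
                (N.fire u m₁) q + (N.fire u m₁) p else (N.fire u m₁) q)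
          rw [hpostM u huT' hut, hpreM2 u hpu q]
          show _ = (if q = p then 0 else if (q, t) ∈ N.F then
                (m₁ q - N.pre u q + N.post u q) + (m₁ p - N.pre u p + N.post u p)
              else m₁ q - N.pre u q + N.post u q)
          by_cases h2 : q = p
          · have hqt : (q, t) ∉ N.F := by rw [h2]; exact hpt
            have h10 : N.post u q = 0 := by rw [h2, hpostup]
            simp only [if_pos h2, if_neg hqt, h10]
          · by_cases h1 : (q, t) ∈ N.F
            · have h9 : N.pre u q = 0 := by rw [hpreu, if_neg (hSU q u h1 hpu).1]
              simp only [if_neg h2, if_pos h1, h9, hpup, hpostup]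
              omega
            · simp only [if_neg h2, if_neg h1]
        exact Relation.ReflTransGen.single ⟨u, henM, hfe.symm⟩
      · -- again one step, pre/post unchanged
        have hp1 := hpreM1 u huT' hut hpu
        have hp2 := hpostM u huT' hut
        have hpup : N.pre u p = 0 := by rw [hpreu, if_neg hpu]
        have henM : (N.removeTP t p).enabled u (unfire t p N.F m₁) := by
          refine ⟨hMT, fun q => ?_⟩
          show (N.removeTP t p).pre u q ≤
            (if q = p then 0 else if (q, t) ∈ N.F then m₁ q + m₁ p else m₁ q)
          rw [hp1]
          by_cases h2 : q = p
          · rw [if_pos h2, h2, hpup]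
          · by_cases h1 : (q, t) ∈ N.F
            · simp only [if_neg h2, if_pos h1]
              exact le_trans (hen q) (Nat.le_add_right _ _)
            · simp only [if_neg h2, if_neg h1]
              exact hen q
        have hfe : (N.removeTP t p).fire u (unfire t p N.F m₁) =
            unfire t p N.F (N.fire u m₁) := by
          funext q
          show (if q = p then 0 else if (q, t) ∈ N.F then m₁ q + m₁ p else m₁ q)
              - (N.removeTP t p).pre u q + (N.removeTP t p).post u q
            = (if q = p then 0 else if (q, t) ∈ N.F then
                (m₁ q - N.pre u q + N.post u q) + (m₁ p - N.pre u p + N.post u p)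
              else m₁ q - N.pre u q + N.post u q)
          rw [hp1, hp2]
          by_cases h2 : q = p
          · have h9 : N.pre u q = 0 := by rw [h2, hpup]
            have h10 : N.post u q = 0 := by rw [h2, hpostup]
            rw [if_pos h2, if_pos h2, h9, h10]
          · by_cases h1 : (q, t) ∈ N.F
            · have h4 : N.pre u q ≤ m₁ q := hen q
              rw [if_neg h2, if_neg h2, if_pos h1, if_pos h1, hpup, hpostup]
              omega
            · rw [if_neg h2, if_neg h2, if_neg h1, if_neg h1]
        exact Relation.ReflTransGen.single ⟨u, henM, hfe.symm⟩
  -- invariant : the reduced net never touches p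
  have hinv : ∀ m₁ m₂, (N.removeTP t p).reach m₁ m₂ → m₂ p = m₁ p := by
    intro m₁ m₂ h
    induction h with
    | refl => rfl
    | tail _ hstep ih =>
        obtain ⟨u, -, rfl⟩ := hstep
        show _ - (N.removeTP t p).pre u p + (N.removeTP t p).post u p = m₁ p
        rw [hMpre_p u, hMpost_p u]
        omega
  -- main argument
  intro k k' hk m hm
  replace hm : (N.removeTP t p).reach (Net.bag k N.I) (m + Net.bag k' N.O) := hm
  show (N.removeTP t p).reach m (Net.bag (k - k') N.O)
  have hmp : m p = 0 := by
    have h0 := hinv _ _ hm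
    have e : (m + Net.bag k' N.O) p = m p + 0 := by
      rw [Pi.add_apply]
      congr 1
      rw [Net.bag, if_neg hpO]
    rw [e] at h0
    rw [Net.bag, if_neg hpI] at h0
    omega
  have h1 : N.reach (Net.bag k N.I) (m + Net.bag k' N.O) :=
    reflTransGen_lift id (fun a b hab => hAstep a b hab) hm
  have h2 := hsub k k' hk m h1
  have h3 := reflTransGen_lift (unfire t p N.F) hBstep h2
  have e1 : unfire t p N.F m = m := by
    funext q
    simp only [unfire, hmp]
    split_ifs with h h'
    · rw [h]; exact hmp.symm
    · omega
    · rfl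
  have e2 : unfire t p N.F (Net.bag (k - k') N.O) = Net.bag (k - k') N.O := by
    funext q
    have hb : Net.bag (k - k') N.O p = 0 := by rw [Net.bag, if_neg hpO]
    simp only [unfire, hb]
    split_ifs with h h'
    · rw [h, hb]
    · omega
    · rfl
  rw [e1, e2] at h3
  exact h3
end

section
/- Let N be a pWF net with place p* and transition t* such that p*'s postset is exactly {t*}, t*'s preset is exactly {p*}, p* is not an input or output place, and there are no edges between •p* and t*•. Let M be obtained from N by removing p* and t* and adding all edges in •p* × t*•. Then M is substitution-sound if N is substitution-sound. -/
/-- removal of a place-transition pair: remove `p` and `t` and add all edges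
from the preset of `p` to the postset of `t` -/
def Net.removePT (N : Net) (p t : ℕ) : Net where
  P := N.P.erase p
  T := N.T.erase t
  F := (N.F.filter fun e => e.1 ≠ t ∧ e.2 ≠ t ∧ e.1 ≠ p ∧ e.2 ≠ p)
        ∪ (N.inEdges p ×ˢ N.outEdges t)
  I := N.I
  O := N.O

namespace NetAux

open Net

lemma mem_inEdges {N : Net} {n x : ℕ} : x ∈ N.inEdges n ↔ (x, n) ∈ N.F := by
  simp only [Net.inEdges, Finset.mem_image, Finset.mem_filter]
  constructor
  · rintro ⟨⟨a, b⟩, ⟨h, rfl⟩, rfl⟩; exact h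
  · intro h; exact ⟨(x, n), ⟨h, rfl⟩, rfl⟩

lemma mem_outEdges {N : Net} {n y : ℕ} : y ∈ N.outEdges n ↔ (n, y) ∈ N.F := by
  simp only [Net.outEdges, Finset.mem_image, Finset.mem_filter]
  constructor
  · rintro ⟨⟨a, b⟩, ⟨h, rfl⟩, rfl⟩; exact h
  · intro h; exact ⟨(n, y), ⟨h, rfl⟩, rfl⟩

/-- context packaging the hypotheses of the theorem -/
structure Ctx (N : Net) (p t : ℕ) : Prop where
  petri : N.IsPetri
  hp : p ∈ N.P
  ht : t ∈ N.T
  hpost : N.outEdges p = {t}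
  hpre : N.inEdges t = {p}
  hpI : p ∉ N.I
  hpO : p ∉ N.O
  hnoedge : ∀ x ∈ N.inEdges p, ∀ y ∈ N.outEdges t, (x, y) ∉ N.F ∧ (y, x) ∉ N.F
  hxp : ∃ x, (x, p) ∈ N.F

variable {N : Net} {p t : ℕ}

lemma Ctx.pP (C : Ctx N p t) : p ∉ N.T := Finset.disjoint_left.mp C.petri.1 C.hp

lemma Ctx.petri' (C : Ctx N p t) {a b : ℕ} (h : (a, b) ∈ N.F) :
    (a ∈ N.P ∧ b ∈ N.T) ∨ (a ∈ N.T ∧ b ∈ N.P) := C.petri.2 _ h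
lemma Ctx.tT (C : Ctx N p t) : t ∉ N.P := Finset.disjoint_right.mp C.petri.1 C.ht
lemma Ctx.ptne (C : Ctx N p t) : p ≠ t := fun h => C.pP (h ▸ C.ht)

lemma Ctx.tp_not (C : Ctx N p t) : (t, p) ∉ N.F := by
  intro h
  obtain ⟨x, hx⟩ := C.hxp
  exact (C.hnoedge x (mem_inEdges.2 hx) p (mem_outEdges.2 h)).1 hx

/-- (x,p) ∈ F implies x ∈ T and x ≠ t -/
lemma Ctx.src_of_inp (C : Ctx N p t) {x : ℕ} (h : (x, p) ∈ N.F) : x ∈ N.T ∧ x ≠ t := by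
  rcases C.petri' h with ⟨_, h2⟩ | ⟨h1, _⟩
  · exact absurd h2 C.pP
  · exact ⟨h1, fun he => C.tp_not (he ▸ h)⟩

/-- (q,x) ∈ F with x ∈ T, x ≠ t implies q ∈ P, q ≠ t, q ≠ p -/
lemma Ctx.src_of_pre (C : Ctx N p t) {x q : ℕ} (hx : x ∈ N.T) (hxt : x ≠ t)
    (h : (q, x) ∈ N.F) : q ∈ N.P ∧ q ≠ t ∧ q ≠ p := by
  rcases C.petri' h with ⟨h1, _⟩ | ⟨_, h2⟩
  · refine ⟨h1, fun he => C.tT (he ▸ h1), fun he => ?_⟩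
    subst he
    have := mem_outEdges.2 h
    rw [C.hpost, Finset.mem_singleton] at this
    exact hxt this
  · exact absurd hx (Finset.disjoint_left.mp C.petri.1 h2)

lemma Ctx.pre_t (C : Ctx N p t) : N.pre t = fun q => if q = p then 1 else 0 := by
  funext q
  simp only [Net.pre]
  congr 1
  rw [show ((q, t) ∈ N.F) = (q ∈ N.inEdges t) from (propext mem_inEdges).symm, C.hpre]
  simp

/-- membership in the edge set of the reduced net, for pre-edges of x ∈ T \ {t} -/
lemma Ctx.memM_pre (C : Ctx N p t) {x q : ℕ} (hx : x ∈ N.T) (hxt : x ≠ t) :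
    ((q, x) ∈ (N.removePT p t).F) ↔ (q, x) ∈ N.F := by
  simp only [Net.removePT, Finset.mem_union, Finset.mem_filter, Finset.mem_product]
  constructor
  · rintro (⟨h, _⟩ | ⟨_, h2⟩)
    · exact h
    · have hf := mem_outEdges.1 h2
      rcases C.petri' hf with ⟨h1', _⟩ | ⟨_, h2'⟩
      · exact absurd h1' C.tT
      · exact absurd hx (Finset.disjoint_left.mp C.petri.1 h2')
  · intro h
    obtain ⟨hqP, hqt, hqp⟩ := C.src_of_pre hx hxt h
    exact Or.inl ⟨h, hqt, hxt, hqp, fun he => C.pP (he ▸ hx)⟩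

lemma Ctx.preM (C : Ctx N p t) {x : ℕ} (hx : x ∈ N.T) (hxt : x ≠ t) :
    (N.removePT p t).pre x = N.pre x := by
  funext q
  simp only [Net.pre]
  congr 1
  exact propext (C.memM_pre hx hxt)

/-- membership in the edge set of the reduced net, for post-edges of x ∈ T \ {t} -/
lemma Ctx.memM_post (C : Ctx N p t) {x q : ℕ} (hx : x ∈ N.T) (hxt : x ≠ t) :
    ((x, q) ∈ (N.removePT p t).F) ↔ (((x, q) ∈ N.F ∧ q ≠ p) ∨ ((x, p) ∈ N.F ∧ (t, q) ∈ N.F)) := by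
  simp only [Net.removePT, Finset.mem_union, Finset.mem_filter, Finset.mem_product]
  constructor
  · rintro (⟨h, _, _, _, h4⟩ | ⟨h1, h2⟩)
    · exact Or.inl ⟨h, h4⟩
    · exact Or.inr ⟨mem_inEdges.1 h1, mem_outEdges.1 h2⟩
  · rintro (⟨h, hqp⟩ | ⟨h1, h2⟩)
    · rcases C.petri' h with ⟨h1, h2⟩ | ⟨h1, h2⟩
      · exact absurd hx (Finset.disjoint_left.mp C.petri.1 h1)
      · exact Or.inl ⟨h, hxt, fun he => C.tT (he ▸ h2), fun he => C.pP (he ▸ hx), hqp⟩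
    · exact Or.inr ⟨mem_inEdges.2 h1, mem_outEdges.2 h2⟩


/-- collapse tokens on p onto the postset of t -/
def phi (N : Net) (p t : ℕ) (m : Net.Marking) : Net.Marking :=
  fun q => if q = p then 0 else m q + (if (t, q) ∈ N.F then m p else 0)

lemma phi_p (m : Net.Marking) : phi N p t m p = 0 := if_pos rfl

lemma phi_of_zero {m : Net.Marking} (h : m p = 0) : phi N p t m = m := by
  funext q
  by_cases hq : q = p
  · subst hq; simp [phi, h]
  · simp [phi, hq, h]

lemma Ctx.fire_t_phi (C : Ctx N p t) {m : Net.Marking} (hm : 1 ≤ m p) :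
    phi N p t (N.fire t m) = phi N p t m := by
  have hfp : N.fire t m p = m p - 1 := by
    simp [Net.fire, C.pre_t, Net.post, C.tp_not]
  funext q
  by_cases hq : q = p
  · subst hq; simp [phi]
  · have h1 : N.fire t m q = m q + (if (t, q) ∈ N.F then 1 else 0) := by
      simp [Net.fire, C.pre_t, Net.post, hq]
    simp only [phi, if_neg hq, h1, hfp]
    split <;> omega

lemma Ctx.reach_phi (C : Ctx N p t) (m : Net.Marking) : N.reach m (phi N p t m) := by
  generalize h : m p = k
  induction k generalizing m with
  | zero =>
    rw [phi_of_zero h]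
    exact Relation.ReflTransGen.refl
  | succ n ih =>
    have hen : N.enabled t m := by
      refine ⟨C.ht, fun q => ?_⟩
      rw [C.pre_t]
      dsimp only
      split
      · rename_i hq; subst hq; omega
      · omega
    have hfp : N.fire t m p = n := by
      simp [Net.fire, C.pre_t, Net.post, C.tp_not, h]
    have := ih (N.fire t m) hfp
    rw [C.fire_t_phi (by omega)] at this
    exact Relation.ReflTransGen.head ⟨t, hen, rfl⟩ this

/-- if-indicator helper -/
lemma ind_le {P : Prop} [Decidable P] {a : ℕ} (h : P → 1 ≤ a) :
    (if P then 1 else 0) ≤ a := by split <;> simp_all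

lemma Ctx.preN_le_phi (C : Ctx N p t) {x : ℕ} (hx : x ∈ N.T) (hxt : x ≠ t)
    {m : Net.Marking} (hm : N.pre x ≤ m) : N.pre x ≤ phi N p t m := by
  intro q
  have hq := hm q
  simp only [Net.pre] at hq ⊢
  by_cases hqp : q = p
  · have hpx : (p, x) ∉ N.F := fun hpx => hxt (by
      have := mem_outEdges.2 hpx
      rwa [C.hpost, Finset.mem_singleton] at this)
    rw [hqp]
    simp [phi, hpx]
  · simp only [phi, if_neg hqp]
    refine le_trans hq ?_
    split <;> omega

lemma Ctx.forward_step (C : Ctx N p t) {m₁ m₂ : Net.Marking} (h : N.stepRel m₁ m₂) :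
    (N.removePT p t).reach (phi N p t m₁) (phi N p t m₂) := by
  obtain ⟨x, ⟨hxT, hxpre⟩, rfl⟩ := h
  by_cases hxt : x = t
  · subst hxt
    have h1 : 1 ≤ m₁ p := by
      have := hxpre p
      rw [C.pre_t] at this
      simpa using this
    rw [C.fire_t_phi h1]
    exact Relation.ReflTransGen.refl
  · refine Relation.ReflTransGen.single ⟨x, ⟨?_, ?_⟩, ?_⟩
    · exact Finset.mem_erase.2 ⟨hxt, hxT⟩
    · rw [C.preM hxT hxt]
      exact C.preN_le_phi hxT hxt hxpre
    · -- fire_M x (phi m₁) = phi (fire_N x m₁)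
      funext q
      have hpre_eq := C.preM hxT hxt
      have hpxp : (p, x) ∉ N.F := by
        intro hpx
        have := mem_outEdges.2 hpx
        rw [C.hpost, Finset.mem_singleton] at this
        exact hxt this
      by_cases hqp : q = p
      · have hpostM : (N.removePT p t).post x p = 0 := by
          simp only [Net.post, C.memM_post hxT hxt]
          simp [C.tp_not]
        subst hqp
        rw [phi_p]
        simp only [Net.fire]
        rw [hpre_eq, hpostM, phi_p]
        simp [Net.pre, hpxp]
      · have hexcl : ¬((x, p) ∈ N.F ∧ (t, q) ∈ N.F ∧ (x, q) ∈ N.F) := fun ⟨h1, h2, h3⟩ =>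
          (C.hnoedge x (mem_inEdges.2 h1) q (mem_outEdges.2 h2)).1 h3
        have hqle := hxpre q
        simp only [Net.pre] at hqle
        have hpostM : (N.removePT p t).post x q =
            (if (x, q) ∈ N.F then 1 else 0) +
            (if (x, p) ∈ N.F ∧ (t, q) ∈ N.F then 1 else 0) := by
          simp only [Net.post, C.memM_post hxT hxt]
          by_cases h1 : (x, p) ∈ N.F <;> by_cases h2 : (t, q) ∈ N.F <;>
            by_cases h3 : (x, q) ∈ N.F <;>
            simp only [h1, h2, h3, hqp, ne_eq, not_false_iff, ite_true, ite_false, true_and,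
              and_true, false_and, and_false, true_or, or_true, false_or, or_false,
              not_true, not_false_eq_true, iff_true, iff_false] <;>
            first | omega | exact absurd ⟨h1, h2, h3⟩ hexcl
        simp only [Net.fire]
        rw [hpre_eq, hpostM]
        simp only [phi, if_neg hqp, Net.fire, Net.pre, Net.post]
        split_ifs at hqle ⊢ <;> first | omega | tauto

lemma Ctx.memM_ne_p (C : Ctx N p t) {a b : ℕ} (h : (a, b) ∈ (N.removePT p t).F) :
    a ≠ p ∧ b ≠ p := by
  simp only [Net.removePT, Finset.mem_union, Finset.mem_filter, Finset.mem_product] at h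
  rcases h with ⟨_, _, _, h3, h4⟩ | ⟨h1, h2⟩
  · exact ⟨h3, h4⟩
  · constructor
    · intro he; subst he
      exact C.pP (C.src_of_inp (mem_inEdges.1 h1)).1
    · intro he; subst he
      exact C.tp_not (mem_outEdges.1 h2)

lemma Ctx.stepM_p (C : Ctx N p t) {m₁ m₂ : Net.Marking}
    (h : (N.removePT p t).stepRel m₁ m₂) : m₂ p = m₁ p := by
  obtain ⟨x, _, rfl⟩ := h
  have h1 : (p, x) ∉ (N.removePT p t).F := fun hh => (C.memM_ne_p hh).1 rfl
  have h2 : (x, p) ∉ (N.removePT p t).F := fun hh => (C.memM_ne_p hh).2 rfl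
  simp [Net.fire, Net.pre, Net.post, h1, h2]

lemma Ctx.reachM_p (C : Ctx N p t) {m₁ m₂ : Net.Marking}
    (h : (N.removePT p t).reach m₁ m₂) : m₂ p = m₁ p := by
  induction h with
  | refl => rfl
  | tail _ hstep ih => rw [C.stepM_p hstep, ih]

lemma Ctx.forward_reach (C : Ctx N p t) {m₁ m₂ : Net.Marking} (h : N.reach m₁ m₂) :
    (N.removePT p t).reach (phi N p t m₁) (phi N p t m₂) := by
  induction h with
  | refl => exact Relation.ReflTransGen.refl
  | tail _ hstep ih => exact ih.trans (C.forward_step hstep)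

lemma Ctx.backward_step (C : Ctx N p t) {m₁ m₂ : Net.Marking}
    (h : (N.removePT p t).stepRel m₁ m₂) : N.reach m₁ m₂ := by
  obtain ⟨x, ⟨hxT', hxpre⟩, rfl⟩ := h
  have hxT'' := hxT'
  rw [show (N.removePT p t).T = N.T.erase t from rfl, Finset.mem_erase] at hxT''
  obtain ⟨hxt, hxT⟩ := hxT''
  rw [C.preM hxT hxt] at hxpre
  have henN : N.enabled x m₁ := ⟨hxT, hxpre⟩
  have hpxp : (p, x) ∉ N.F := fun hpx => hxt (by
    have := mem_outEdges.2 hpx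
    rwa [C.hpost, Finset.mem_singleton] at this)
  by_cases hxp : (x, p) ∈ N.F
  · -- two steps: fire x, then fire t
    have hstep1 : N.stepRel m₁ (N.fire x m₁) := ⟨x, henN, rfl⟩
    have hfp : N.fire x m₁ p = m₁ p + 1 := by
      simp [Net.fire, Net.pre, Net.post, hpxp, hxp]
    have hent : N.enabled t (N.fire x m₁) := by
      refine ⟨C.ht, fun q => ?_⟩
      rw [C.pre_t]
      dsimp only
      split
      · rename_i hq; rw [hq, hfp]; omega
      · omega
    have hstep2 : N.stepRel (N.fire x m₁) (N.fire t (N.fire x m₁)) := ⟨t, hent, rfl⟩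
    have heq : N.fire t (N.fire x m₁) = (N.removePT p t).fire x m₁ := by
      funext q
      have hqle := hxpre q
      simp only [Net.pre] at hqle
      have hexcl : ¬((t, q) ∈ N.F ∧ (x, q) ∈ N.F) := fun ⟨h2, h3⟩ =>
        (C.hnoedge x (mem_inEdges.2 hxp) q (mem_outEdges.2 h2)).1 h3
      by_cases hqp : q = p
      · rw [hqp]
        have hpostM : (N.removePT p t).post x p = 0 := by
          simp only [Net.post, C.memM_post hxT hxt]
          simp [C.tp_not]
        have h0 : N.pre x p = 0 := by simp [Net.pre, hpxp]
        have hL : N.fire t (N.fire x m₁) p = m₁ p := by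
          simp [Net.fire, C.pre_t, Net.post, C.tp_not, hxp, h0]
        rw [hL]
        simp only [Net.fire]
        rw [C.preM hxT hxt, hpostM, h0]
        omega
      · have hpostM : (N.removePT p t).post x q =
            (if (x, q) ∈ N.F then 1 else 0) +
            (if (x, p) ∈ N.F ∧ (t, q) ∈ N.F then 1 else 0) := by
          simp only [Net.post, C.memM_post hxT hxt]
          by_cases h2 : (t, q) ∈ N.F <;> by_cases h3 : (x, q) ∈ N.F <;>
            simp only [h2, h3, hxp, hqp, ne_eq, not_false_iff, ite_true, ite_false, true_and,
              and_true, false_and, and_false, true_or, or_true, false_or, or_false,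
              not_true, not_false_eq_true, iff_true, iff_false] <;>
            first | omega | exact absurd ⟨h2, h3⟩ hexcl
        have hqt : (q, t) ∉ N.F := fun hf => hqp (by
          have := mem_inEdges.2 hf
          rwa [C.hpre, Finset.mem_singleton] at this)
        simp only [Net.fire]
        rw [C.preM hxT hxt, hpostM]
        simp only [Net.pre, Net.post, C.pre_t]
        split_ifs at hqle ⊢ <;> first | omega | tauto
    rw [← heq]
    exact Relation.ReflTransGen.head hstep1 (Relation.ReflTransGen.single hstep2)
  · -- one step: fire x
    have heq : N.fire x m₁ = (N.removePT p t).fire x m₁ := by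
      funext q
      have hqle := hxpre q
      simp only [Net.pre] at hqle
      by_cases hqp : q = p
      · rw [hqp]
        have hpostM : (N.removePT p t).post x p = 0 := by
          simp only [Net.post, C.memM_post hxT hxt]
          simp [C.tp_not]
        simp only [Net.fire]
        rw [C.preM hxT hxt, hpostM]
        have h0 : N.pre x p = 0 := by simp [Net.pre, hpxp]
        have h1 : N.post x p = 0 := by simp [Net.post, hxp]
        rw [h0, h1]
      · have hpostM : (N.removePT p t).post x q = (if (x, q) ∈ N.F then 1 else 0) := by
          simp only [Net.post, C.memM_post hxT hxt]
          by_cases h3 : (x, q) ∈ N.F <;> simp [h3, hqp, hxp]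
        simp only [Net.fire]
        rw [C.preM hxT hxt, hpostM]
        simp only [Net.pre, Net.post]
    rw [← heq]
    exact Relation.ReflTransGen.single ⟨x, henN, rfl⟩

lemma Ctx.backward_reach (C : Ctx N p t) {m₁ m₂ : Net.Marking}
    (h : (N.removePT p t).reach m₁ m₂) : N.reach m₁ m₂ := by
  induction h with
  | refl => exact Relation.ReflTransGen.refl
  | tail _ hstep ih => exact ih.trans (C.backward_step hstep)

end NetAux

theorem stmt15 (N : Net) (p t : ℕ) (hN : N.IsPWF) (hp : p ∈ N.P) (ht : t ∈ N.T)
    (hpost : N.outEdges p = {t}) (hpre : N.inEdges t = {p})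
    (hpI : p ∉ N.I) (hpO : p ∉ N.O)
    (hnoedge : ∀ x ∈ N.inEdges p, ∀ y ∈ N.outEdges t, (x, y) ∉ N.F ∧ (y, x) ∉ N.F)
    (hsub : N.subSound) : (N.removePT p t).subSound := by
  obtain ⟨i, hiI, hipath⟩ := hN.2.2.2.2.2.1 p (Finset.mem_union_left _ hp)
  have hxp : ∃ x, (x, p) ∈ N.F := by
    rcases hipath.cases_tail with he | ⟨c, _, hc⟩
    · exact absurd (he ▸ hiI) hpI
    · exact ⟨c, hc⟩
  have C : NetAux.Ctx N p t := ⟨hN.1, hp, ht, hpost, hpre, hpI, hpO, hnoedge, hxp⟩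
  intro k k' hk m hreach
  have hIM : (N.removePT p t).I = N.I := rfl
  have hOM : (N.removePT p t).O = N.O := rfl
  rw [hIM, hOM] at hreach
  rw [hOM]
  have hmp : m p = 0 := by
    have h1 := C.reachM_p hreach
    have h2 : Net.bag k N.I p = 0 := by simp [Net.bag, hpI]
    have h3 : Net.bag k' N.O p = 0 := by simp [Net.bag, hpO]
    simp only [Pi.add_apply, h2, h3] at h1
    omega
  have hN1 : N.reach (Net.bag k N.I) (m + Net.bag k' N.O) := C.backward_reach hreach
  have h2 := hsub k k' hk m hN1
  have h3 := C.forward_reach h2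
  rwa [NetAux.phi_of_zero hmp,
    NetAux.phi_of_zero (by simp [Net.bag, hpO] : Net.bag (k - k') N.O p = 0)] at h3
end

section
/- Every one-input one-output pOR net is substitution-sound. In particular, in a pOR net the total number of tokens is invariant under firing: if |m| = k and m →σ m', then |m'| = k. -/
/-- total number of tokens of a marking -/
def Net.total (N : Net) (m : Net.Marking) : ℕ := ∑ q ∈ N.P, m q

namespace StmtAux

open Net

/-- marking with a single token on `p` -/
def single (p : ℕ) : Net.Marking := fun q => if q = p then 1 else 0

lemma mem_inEdges {N : Net} {q t : ℕ} : q ∈ N.inEdges t ↔ (q, t) ∈ N.F := by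
  simp only [Net.inEdges, Finset.mem_image, Finset.mem_filter]
  constructor
  · rintro ⟨⟨a, b⟩, ⟨hab, rfl⟩, rfl⟩; exact hab
  · intro h; exact ⟨(q, t), ⟨h, rfl⟩, rfl⟩

lemma mem_outEdges {N : Net} {q t : ℕ} : q ∈ N.outEdges t ↔ (t, q) ∈ N.F := by
  simp only [Net.outEdges, Finset.mem_image, Finset.mem_filter]
  constructor
  · rintro ⟨⟨a, b⟩, ⟨hab, rfl⟩, rfl⟩; exact hab
  · intro h; exact ⟨(t, q), ⟨h, rfl⟩, rfl⟩

lemma sum_single {s : Finset ℕ} {a : ℕ} (ha : a ∈ s) :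
    (∑ q ∈ s, single a q) = 1 := by
  simp only [single]
  rw [Finset.sum_ite_eq' s a (fun _ => 1)]
  simp [ha]

/-- structure of transitions in a pOR net: one input place, one output place -/
lemma trans_struct {N : Net} (hN : N.IsPWF) (hOR : N.IsOR) {t : ℕ} (ht : t ∈ N.T) :
    ∃ p p', p ∈ N.P ∧ p' ∈ N.P ∧ N.pre t = single p ∧ N.post t = single p' := by
  obtain ⟨⟨hdis, hF⟩, hIP, hOP, _, _, _⟩ := hN
  have htI : t ∉ N.I := fun h => (Finset.disjoint_left.mp hdis (hIP h)) ht
  have htO : t ∉ N.O := fun h => (Finset.disjoint_left.mp hdis (hOP h)) ht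
  obtain ⟨hin, hout⟩ := hOR t ht
  have hin1 : (N.inEdges t).card = 1 := by rcases hin with ⟨h, _⟩ | ⟨_, h⟩ <;> [exact absurd h htI; exact h]
  have hout1 : (N.outEdges t).card = 1 := by rcases hout with ⟨h, _⟩ | ⟨_, h⟩ <;> [exact absurd h htO; exact h]
  obtain ⟨p, hp⟩ := Finset.card_eq_one.mp hin1
  obtain ⟨p', hp'⟩ := Finset.card_eq_one.mp hout1
  have hpF : (p, t) ∈ N.F := mem_inEdges.mp (by rw [hp]; exact Finset.mem_singleton_self p)
  have hp'F : (t, p') ∈ N.F := mem_outEdges.mp (by rw [hp']; exact Finset.mem_singleton_self p')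
  have hpP : p ∈ N.P := by
    rcases hF _ hpF with ⟨h, _⟩ | ⟨_, h⟩
    · exact h
    · exact absurd h (Finset.disjoint_right.mp hdis ht)
  have hp'P : p' ∈ N.P := by
    rcases hF _ hp'F with ⟨h, _⟩ | ⟨_, h⟩
    · exact absurd h (Finset.disjoint_right.mp hdis ht)
    · exact h
  refine ⟨p, p', hpP, hp'P, ?_, ?_⟩
  · funext q
    simp only [Net.pre, single]
    by_cases h : (q, t) ∈ N.F
    · have : q ∈ N.inEdges t := mem_inEdges.mpr h
      rw [hp, Finset.mem_singleton] at this
      subst this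
      simp [hpF]
    · have : q ≠ p := by
        rintro rfl; exact h hpF
      simp [h, this]
  · funext q
    simp only [Net.post, single]
    by_cases h : (t, q) ∈ N.F
    · have : q ∈ N.outEdges t := mem_outEdges.mpr h
      rw [hp', Finset.mem_singleton] at this
      subst this
      simp [hp'F]
    · have : q ≠ p' := by
        rintro rfl; exact h hp'F
      simp [h, this]

lemma total_fire {N : Net} {t : ℕ} {m : Net.Marking} {p p' : ℕ}
    (hp : p ∈ N.P) (hp' : p' ∈ N.P) (hpre : N.pre t = single p) (hpost : N.post t = single p')
    (hen : N.pre t ≤ m) : N.total (N.fire t m) = N.total m := by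
  have hle : ∀ q, single p q ≤ m q := by intro q; have := hen q; rwa [hpre] at this
  have e1 : N.total (N.fire t m) = (∑ q ∈ N.P, (m q - single p q)) + 1 := by
    unfold Net.total Net.fire
    rw [hpre, hpost, Finset.sum_add_distrib, sum_single hp']
  have e2 : N.total m = (∑ q ∈ N.P, (m q - single p q)) + 1 := by
    unfold Net.total
    rw [← sum_single hp, ← Finset.sum_add_distrib]
    exact Finset.sum_congr rfl fun q _ => (Nat.sub_add_cancel (hle q)).symm
  rw [e1, e2]

lemma total_step {N : Net} (hN : N.IsPWF) (hOR : N.IsOR) {m m' : Net.Marking}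
    (h : N.stepRel m m') : N.total m = N.total m' := by
  obtain ⟨t, ⟨ht, hen⟩, rfl⟩ := h
  obtain ⟨p, p', hp, hp', hpre, hpost⟩ := trans_struct hN hOR ht
  exact (total_fire hp hp' hpre hpost hen).symm

lemma total_reach {N : Net} (hN : N.IsPWF) (hOR : N.IsOR) {m m' : Net.Marking}
    (h : N.reach m m') : N.total m = N.total m' := by
  induction h with
  | refl => rfl
  | tail _ hstep ih => exact ih.trans (total_step hN hOR hstep)

lemma support_step {N : Net} (hN : N.IsPWF) {m m' : Net.Marking}
    (h : N.stepRel m m') {q : ℕ} (hq : q ∉ N.P) : m' q = m q := by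
  obtain ⟨t, ⟨ht, hen⟩, rfl⟩ := h
  obtain ⟨⟨hdis, hF⟩, _⟩ := hN
  have h1 : N.pre t q = 0 := by
    unfold Net.pre
    split
    · rcases hF _ (by assumption) with ⟨h, _⟩ | ⟨_, h⟩
      · exact absurd h hq
      · exact absurd h (Finset.disjoint_right.mp hdis ht)
    · rfl
  have h2 : N.post t q = 0 := by
    unfold Net.post
    split
    · rcases hF _ (by assumption) with ⟨h, _⟩ | ⟨_, h⟩
      · exact absurd h (Finset.disjoint_right.mp hdis ht)
      · exact absurd h hq
    · rfl
  simp [Net.fire, h1, h2]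

lemma support_reach {N : Net} (hN : N.IsPWF) {m m' : Net.Marking}
    (h : N.reach m m') {q : ℕ} (hq : q ∉ N.P) : m' q = m q := by
  induction h with
  | refl => rfl
  | tail _ hstep ih => exact (support_step hN hstep hq).trans ih

lemma step_add {N : Net} {m m' : Net.Marking} (h : N.stepRel m m') (c : Net.Marking) :
    N.stepRel (m + c) (m' + c) := by
  obtain ⟨t, ⟨ht, hen⟩, rfl⟩ := h
  refine ⟨t, ⟨ht, fun q => le_trans (hen q) (by simp [Pi.add_apply])⟩, ?_⟩
  funext q
  have h1 : N.pre t q ≤ m q := hen q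
  show (N.fire t m) q + c q = (m + c) q - N.pre t q + N.post t q
  simp only [Net.fire, Pi.add_apply]
  omega

lemma reach_add {N : Net} {m m' : Net.Marking} (h : N.reach m m') (c : Net.Marking) :
    N.reach (m + c) (m' + c) := by
  induction h with
  | refl => exact .refl
  | tail _ hstep ih => exact ih.tail (step_add hstep c)

lemma reach_add_left {N : Net} {m m' : Net.Marking} (h : N.reach m m') (c : Net.Marking) :
    N.reach (c + m) (c + m') := by
  rw [add_comm c m, add_comm c m']
  exact reach_add h c

/-- routing a single token from any place to the output place -/
lemma route_aux {N : Net} (hN : N.IsPWF) (hOR : N.IsOR) {po : ℕ} (hpoP : po ∈ N.P)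
    {x : ℕ} (hpath : N.pathReach x po) :
    ∀ p ∈ N.P, (p = x ∨ ((p, x) ∈ N.F ∧ x ∈ N.T)) → N.reach (single p) (single po) := by
  obtain ⟨⟨hdis, hF⟩, hIP, hOP, _, _, _⟩ := hN
  induction hpath using Relation.ReflTransGen.head_induction_on with
  | refl =>
    intro p hp hcase
    rcases hcase with rfl | ⟨_, hT⟩
    · exact .refl
    · exact absurd hpoP (Finset.disjoint_right.mp hdis hT)
  | head hxy hyz ih =>
    rename_i x y
    intro p hp hcase
    rcases hcase with rfl | ⟨hpx, hxT⟩
    · -- p = x is a place; its successor y is a transition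
      have hyT : y ∈ N.T := by
        rcases hF _ hxy with ⟨_, h⟩ | ⟨h, _⟩
        · exact h
        · exact absurd h (Finset.disjoint_left.mp hdis hp)
      exact ih p hp (Or.inr ⟨hxy, hyT⟩)
    · -- x is a transition with unique input p and unique output y
      obtain ⟨px, px', hpxP, hpx'P, hpre, hpost⟩ :=
        trans_struct ⟨⟨hdis, hF⟩, hIP, hOP, by assumption, by assumption, by assumption⟩ hOR hxT
      have hppx : px = p := by
        have h2 : N.pre x p = 1 := by unfold Net.pre; simp [hpx]
        rw [hpre] at h2
        simp only [single] at h2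
        by_contra hne
        rw [if_neg (fun h => hne h.symm)] at h2
        exact one_ne_zero h2.symm
      have hxyF : (x, y) ∈ N.F := hxy
      have hypx' : y = px' := by
        have h2 : N.post x y = 1 := by unfold Net.post; simp [hxyF]
        rw [hpost] at h2
        simp only [single] at h2
        by_contra hne
        rw [if_neg hne] at h2
        exact one_ne_zero h2.symm
      have hstep : N.stepRel (single p) (single y) := by
        refine ⟨x, ⟨hxT, by rw [hpre, hppx]⟩, ?_⟩
        funext q
        show single y q = single p q - N.pre x q + N.post x q
        rw [hpre, hpost, hppx, ← hypx']
        omega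
      exact Relation.ReflTransGen.head hstep (ih y (hypx' ▸ hpx'P) (Or.inl rfl))

lemma route {N : Net} (hN : N.IsPWF) (hOR : N.IsOR) {po : ℕ} (hpo : N.O = {po})
    {p : ℕ} (hp : p ∈ N.P) : N.reach (single p) (single po) := by
  have hpoP : po ∈ N.P := hN.2.2.1 (by rw [hpo]; exact Finset.mem_singleton_self po)
  obtain ⟨o, ho, hpath⟩ := hN.2.2.2.2.2.2 p (Finset.mem_union_left _ hp)
  rw [hpo, Finset.mem_singleton] at ho
  subst ho
  exact route_aux hN hOR hpoP hpath p hp (Or.inl rfl)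

lemma reach_smul {N : Net} {m m' : Net.Marking} (h : N.reach m m') (n : ℕ) :
    N.reach (n • m) (n • m') := by
  induction n with
  | zero => simp only [zero_smul]; exact .refl
  | succ n ih =>
    rw [succ_nsmul, succ_nsmul]
    exact (reach_add ih m).trans (reach_add_left h (n • m'))

lemma reach_sum {N : Net} {f g : ℕ → Net.Marking} (S : Finset ℕ)
    (h : ∀ p ∈ S, N.reach (f p) (g p)) :
    N.reach (∑ p ∈ S, f p) (∑ p ∈ S, g p) := by
  classical
  induction S using Finset.induction with
  | empty => exact .refl
  | @insert a s ha ih =>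
    rw [Finset.sum_insert ha, Finset.sum_insert ha]
    exact (reach_add (h a (Finset.mem_insert_self a s)) _).trans
      (reach_add_left (ih fun p hp => h p (Finset.mem_insert_of_mem hp)) _)

lemma decompose {N : Net} (m : Net.Marking) (hm : ∀ q, q ∉ N.P → m q = 0) :
    m = ∑ p ∈ N.P, m p • single p := by
  funext q
  rw [Finset.sum_apply]
  simp only [Pi.smul_apply, single, smul_eq_mul, mul_ite, mul_one, mul_zero]
  rw [Finset.sum_ite_eq N.P q m]
  by_cases h : q ∈ N.P
  · simp [h]
  · simp [h, hm q h]

lemma bag_singleton (k po : ℕ) : Net.bag k {po} = k • single po := by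
  funext q
  simp only [Net.bag, Finset.mem_singleton, Pi.smul_apply, single, smul_eq_mul]
  split <;> simp_all

end StmtAux

open StmtAux in
theorem stmt17 (N : Net) (hN : N.IsPWF) (hOR : N.IsOR)
    (hI : N.I.card = 1) (hO : N.O.card = 1) :
    N.subSound ∧ ∀ m m' : Net.Marking, N.reach m m' → N.total m = N.total m' := by
  obtain ⟨pi, hIeq⟩ := Finset.card_eq_one.mp hI
  obtain ⟨po, hOeq⟩ := Finset.card_eq_one.mp hO
  have hpiP : pi ∈ N.P := hN.2.1 (by rw [hIeq]; exact Finset.mem_singleton_self pi)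
  have hpoP : po ∈ N.P := hN.2.2.1 (by rw [hOeq]; exact Finset.mem_singleton_self po)
  constructor
  · intro k k' hk m hreach
    -- total token count
    have htot : N.total (Net.bag k N.I) = N.total (m + Net.bag k' N.O) := total_reach hN hOR hreach
    have h1 : N.total (Net.bag k N.I) = k := by
      unfold Net.total
      rw [hIeq]
      have : ∀ q ∈ N.P, Net.bag k {pi} q = k • single pi q := by
        intro q _; rw [bag_singleton]; rfl
      rw [Finset.sum_congr rfl this]
      simp only [smul_eq_mul]
      rw [← Finset.mul_sum, sum_single hpiP, mul_one]
    have h2 : N.total (m + Net.bag k' N.O) = N.total m + k' := by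
      unfold Net.total
      rw [Finset.sum_congr rfl (fun q _ => (Pi.add_apply m _ q)), Finset.sum_add_distrib]
      congr 1
      rw [hOeq]
      have : ∀ q ∈ N.P, Net.bag k' {po} q = k' • single po q := by
        intro q _; rw [bag_singleton]; rfl
      rw [Finset.sum_congr rfl this]
      simp only [smul_eq_mul]
      rw [← Finset.mul_sum, sum_single hpoP, mul_one]
    have htm : N.total m = k - k' := by omega
    -- support of m is contained in P
    have hsupp : ∀ q, q ∉ N.P → m q = 0 := by
      intro q hq
      have h3 := support_reach hN hreach hq
      have h4 : Net.bag k N.I q = 0 := by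
        simp only [Net.bag, hIeq, Finset.mem_singleton]
        split
        · exact absurd hpiP (by subst_vars; exact hq)
        · rfl
      have h5 : (m + Net.bag k' N.O) q = m q + Net.bag k' N.O q := rfl
      omega
    -- route all tokens to po
    have hroute : N.reach m ((N.total m) • single po) := by
      have hdec := decompose m hsupp
      have hr : N.reach (∑ p ∈ N.P, m p • single p) (∑ p ∈ N.P, m p • single po) :=
        reach_sum N.P (fun p hp => reach_smul (route hN hOR hOeq hp) (m p))
      rw [← hdec] at hr
      have : (∑ p ∈ N.P, m p • single po) = (N.total m) • single po := by
        rw [← Finset.sum_smul]; rfl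
      rwa [this] at hr
    rw [hOeq, bag_singleton, ← htm]
    exact hroute
  · exact fun m m' h => total_reach hN hOR h
end

section
/- In a pOR net, for every place p there exist firing sequences witnessing [p_i] →* [p] and [p] →* [p_o], where p_i is an input place and p_o is an output place; consequently for any marking m with |m| = k, one has k.[p_i] →* m and m →* k.[p_o]. -/
/-!
In a pOR net every transition consumes exactly one token and produces exactly one, so a
single token can be walked along any directed path of the net graph, one transition at a
time. Connectivity provides such paths from the input place to every place and from every
place to the output place. Since firing is monotone, `m q` tokens on `p_i` can then be
walked to `q` independently for each place `q`, which gives `k.[p_i] →* m`, and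
symmetrically `m →* k.[p_o]`.
-/

namespace Net

variable {N : Net}

@[simp]
theorem mem_inEdges_s18 {n x : ℕ} : x ∈ N.inEdges n ↔ (x, n) ∈ N.F := by
  simp [inEdges]

@[simp]
theorem mem_outEdges_s18 {n x : ℕ} : x ∈ N.outEdges n ↔ (n, x) ∈ N.F := by
  simp [outEdges]

theorem pre_eq_bag_inEdges (t : ℕ) : N.pre t = bag 1 (N.inEdges t) := by
  funext p
  simp [pre, bag]

theorem post_eq_bag_outEdges (t : ℕ) : N.post t = bag 1 (N.outEdges t) := by
  funext p
  simp [post, bag]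

theorem stepRel_add_right {m m' : Marking} (c : Marking) (h : N.stepRel m m') :
    N.stepRel (m + c) (m' + c) := by
  obtain ⟨t, ⟨ht, hpre⟩, rfl⟩ := h
  refine ⟨t, ⟨ht, hpre.trans le_self_add⟩, funext fun p => ?_⟩
  have hle : N.pre t p ≤ m p := hpre p
  simp only [fire, Pi.add_apply]
  omega

theorem reach.add_right {m m' : Marking} (h : N.reach m m') (c : Marking) :
    N.reach (m + c) (m' + c) :=
  h.lift (· + c) fun _ _ => stepRel_add_right c

theorem reach.add {a a' b b' : Marking} (ha : N.reach a a') (hb : N.reach b b') :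
    N.reach (a + b) (a' + b') := by
  refine (ha.add_right b).trans ?_
  rw [add_comm a' b, add_comm a' b']
  exact hb.add_right a'

theorem reach.nsmul {m m' : Marking} (h : N.reach m m') (n : ℕ) :
    N.reach (n • m) (n • m') := by
  induction n with
  | zero =>
    rw [zero_smul, zero_smul]
    exact Relation.ReflTransGen.refl
  | succ n ih => simpa only [succ_nsmul] using ih.add h

theorem reach_sum {ι : Type*} (s : Finset ι) {f g : ι → Marking}
    (h : ∀ i ∈ s, N.reach (f i) (g i)) : N.reach (∑ i ∈ s, f i) (∑ i ∈ s, g i) := by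
  induction s using Finset.cons_induction with
  | empty => exact Relation.ReflTransGen.refl
  | cons a s ha ih =>
    rw [Finset.sum_cons, Finset.sum_cons]
    exact (h a (Finset.mem_cons_self a s)).add
      (ih fun i hi => h i (Finset.mem_cons_of_mem hi))

theorem bag_eq_nsmul (k : ℕ) (S : Finset ℕ) : bag k S = k • bag 1 S := by
  funext p
  simp [bag]

theorem sum_nsmul_bag_singleton {S : Finset ℕ} {m : Marking} (hm : ∀ x, x ∉ S → m x = 0) :
    ∑ q ∈ S, m q • bag 1 {q} = m := by
  funext x
  by_cases hx : x ∈ S <;> simp [bag, hx, hm]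

theorem stepRel_bag_one {t q r : ℕ} (ht : t ∈ N.T) (hin : N.inEdges t = {q})
    (hout : N.outEdges t = {r}) : N.stepRel (bag 1 {q}) (bag 1 {r}) := by
  have hpre : N.pre t = bag 1 {q} := hin ▸ pre_eq_bag_inEdges t
  have hpost : N.post t = bag 1 {r} := hout ▸ post_eq_bag_outEdges t
  refine ⟨t, ⟨ht, hpre.le⟩, funext fun p => ?_⟩
  by_cases hq : p = q <;> by_cases hr : p = r <;> simp [fire, hpre, hpost, bag, hq, hr]

theorem reach_of_forall_reach_bag_one {S : Finset ℕ} {m : Marking} {a : ℕ}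
    (hm : ∀ x, x ∉ S → m x = 0) (h : ∀ q ∈ S, N.reach (bag 1 {a}) (bag 1 {q})) :
    N.reach (bag (∑ q ∈ S, m q) {a}) m := by
  have := reach_sum S fun q hq => (h q hq).nsmul (m q)
  rwa [← Finset.sum_smul, ← bag_eq_nsmul, sum_nsmul_bag_singleton hm] at this

theorem reach_bag_of_forall_reach_bag_one {S : Finset ℕ} {m : Marking} {a : ℕ}
    (hm : ∀ x, x ∉ S → m x = 0) (h : ∀ q ∈ S, N.reach (bag 1 {q}) (bag 1 {a})) :
    N.reach m (bag (∑ q ∈ S, m q) {a}) := by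
  have := reach_sum S fun q hq => (h q hq).nsmul (m q)
  rwa [← Finset.sum_smul, ← bag_eq_nsmul, sum_nsmul_bag_singleton hm] at this

theorem IsPWF.notMem_I_of_mem_T (hN : N.IsPWF) {t : ℕ} (ht : t ∈ N.T) : t ∉ N.I :=
  fun hI => Finset.disjoint_left.mp hN.1.1 (hN.2.1 hI) ht

theorem IsPWF.notMem_O_of_mem_T (hN : N.IsPWF) {t : ℕ} (ht : t ∈ N.T) : t ∉ N.O :=
  fun hO => Finset.disjoint_left.mp hN.1.1 (hN.2.2.1 hO) ht

theorem IsOR.inEdges_eq_singleton (hN : N.IsPWF) (hOR : N.IsOR) {t q : ℕ} (ht : t ∈ N.T)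
    (hq : N.edge q t) : N.inEdges t = {q} := by
  have hcard : (N.inEdges t).card = 1 := by
    rcases (hOR t ht).1 with ⟨hI, -⟩ | ⟨-, h⟩
    exacts [absurd hI (hN.notMem_I_of_mem_T ht), h]
  have hq' : q ∈ N.inEdges t := mem_inEdges_s18.mpr hq
  exact Finset.eq_singleton_iff_unique_mem.mpr
    ⟨hq', fun x hx => Finset.card_le_one.mp hcard.le x hx q hq'⟩

theorem IsOR.outEdges_eq_singleton (hN : N.IsPWF) (hOR : N.IsOR) {t r : ℕ} (ht : t ∈ N.T)
    (hr : N.edge t r) : N.outEdges t = {r} := by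
  have hcard : (N.outEdges t).card = 1 := by
    rcases (hOR t ht).2 with ⟨hO, -⟩ | ⟨-, h⟩
    exacts [absurd hO (hN.notMem_O_of_mem_T ht), h]
  have hr' : r ∈ N.outEdges t := mem_outEdges_s18.mpr hr
  exact Finset.eq_singleton_iff_unique_mem.mpr
    ⟨hr', fun x hx => Finset.card_le_one.mp hcard.le x hx r hr'⟩

theorem IsOR.stepRel_bag_one (hN : N.IsPWF) (hOR : N.IsOR) {q t r : ℕ} (ht : t ∈ N.T)
    (hq : N.edge q t) (hr : N.edge t r) : N.stepRel (bag 1 {q}) (bag 1 {r}) :=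
  Net.stepRel_bag_one ht (hOR.inEdges_eq_singleton hN ht hq)
    (hOR.outEdges_eq_singleton hN ht hr)

/-- Induction along the path: when it ends in a transition, the token already sits on the
place before it and can be fired into any output place of that transition. -/
theorem IsOR.reach_of_pathReach_aux (hN : N.IsPWF) (hOR : N.IsOR) {s x : ℕ} (hs : s ∈ N.P)
    (hpath : N.pathReach s x) :
    (x ∈ N.P → N.reach (bag 1 {s}) (bag 1 {x})) ∧
      (x ∈ N.T → ∀ r, N.edge x r → N.reach (bag 1 {s}) (bag 1 {r})) := by
  have hPT : ∀ {y}, y ∈ N.P → y ∉ N.T := fun hy => Finset.disjoint_left.mp hN.1.1 hy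
  induction hpath with
  | refl => exact ⟨fun _ => .refl, fun hT => absurd hT (hPT hs)⟩
  | @tail b c _ hbc ih =>
    rcases hN.1.2 _ hbc with ⟨hbP, hcT⟩ | ⟨hbT, hcP⟩
    · exact ⟨fun hcP => absurd hcT (hPT hcP),
        fun _ r hr => (ih.1 hbP).tail (hOR.stepRel_bag_one hN hcT hbc hr)⟩
    · exact ⟨fun _ => ih.2 hbT c hbc, fun hcT => absurd hcT (hPT hcP)⟩

theorem IsOR.reach_of_pathReach (hN : N.IsPWF) (hOR : N.IsOR) {p q : ℕ} (hp : p ∈ N.P)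
    (hq : q ∈ N.P) (hpath : N.pathReach p q) : N.reach (bag 1 {p}) (bag 1 {q}) :=
  (hOR.reach_of_pathReach_aux hN hp hpath).1 hq

end Net

theorem stmt18 (N : Net) (hN : N.IsPWF) (hOR : N.IsOR)
    (pi po : ℕ) (hpi : N.I = {pi}) (hpo : N.O = {po}) :
    (∀ p ∈ N.P, N.reach (Net.bag 1 {pi}) (Net.bag 1 {p}) ∧
      N.reach (Net.bag 1 {p}) (Net.bag 1 {po})) ∧
    (∀ (k : ℕ) (m : Net.Marking), (∀ x, x ∉ N.P → m x = 0) → (∑ q ∈ N.P, m q) = k →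
      N.reach (Net.bag k {pi}) m ∧ N.reach m (Net.bag k {po})) := by
  have hpiP : pi ∈ N.P := hN.2.1 (hpi ▸ Finset.mem_singleton_self pi)
  have hpoP : po ∈ N.P := hN.2.2.1 (hpo ▸ Finset.mem_singleton_self po)
  have single : ∀ p ∈ N.P, N.reach (Net.bag 1 {pi}) (Net.bag 1 {p}) ∧
      N.reach (Net.bag 1 {p}) (Net.bag 1 {po}) := by
    intro p hp
    have hnode : p ∈ N.nodes := Finset.mem_union_left _ hp
    obtain ⟨i, hi, hip⟩ := hN.2.2.2.2.2.1 p hnode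
    obtain ⟨o, ho, hpo'⟩ := hN.2.2.2.2.2.2 p hnode
    rw [hpi, Finset.mem_singleton] at hi
    rw [hpo, Finset.mem_singleton] at ho
    subst hi ho
    exact ⟨hOR.reach_of_pathReach hN hpiP hp hip, hOR.reach_of_pathReach hN hp hpoP hpo'⟩
  refine ⟨single, fun k m hm hk => hk ▸ ⟨?_, ?_⟩⟩
  · exact Net.reach_of_forall_reach_bag_one hm fun q hq => (single q hq).1
  · exact Net.reach_bag_of_forall_reach_bag_one hm fun q hq => (single q hq).2
end
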